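/- There exist absolute constants C ≥ 1 and C' ≥ 1 such that the following holds. Let n and B be powers of two with 2 ≤ B < n, let F ≥ 2 be an even integer with (1/4)^{F−1} ≤ 1/B, let Ĝ be a flat filter with B buckets and sharpness F, and let d ≥ C·B·log n be an integer. Then there exist odd σ_1, …, σ_d ∈ [n] and b_1, …, b_d ∈ [n] such that for all f, f' ∈ [n] with f ≠ f', Σ_{r∈[d]} Ĝ_{o_{f,r}(f)}^{−1}·Ĝ_{o_{f,r}(f')} ≤ C'·d/B, where o_{f,r} denotes the offset function of the hashing (σ_r, b_r). -/

import Mathlib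

open Finset

/-- The (integer) rounded bucket index `round((B/n)·π_{σ,b}(f))`, where
`π_{σ,b}(f) = σ(f-b) mod n`. -/
noncomputable def hround (n B : ℕ) (σ b f : ZMod n) : ℤ :=
  round ((B : ℝ) / (n : ℝ) * (((σ * (f - b)).val : ℕ) : ℝ))

/-- The offset `o_{f,σ,b}(f') = π_{σ,b}(f') - (n/B)·h_{σ,b}(f)  (mod n)`. -/
noncomputable def offset (n B : ℕ) (σ b f f' : ZMod n) : ZMod n :=
  σ * (f' - b) - ((n / B : ℕ) : ZMod n) * ((hround n B σ b f : ℤ) : ZMod n)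

/-- The representative of `ℓ ∈ Z_n` in `(-n/2, n/2]`. -/
def rep (n : ℕ) (ℓ : ZMod n) : ℤ :=
  if (ℓ.val : ℤ) ≤ (n : ℤ) / 2 then (ℓ.val : ℤ) else (ℓ.val : ℤ) - (n : ℤ)

/-- A flat filter with `B` buckets and sharpness `F`. -/
def IsFlatFilter (n B F : ℕ) (G : ZMod n → ℝ) : Prop :=
  (∀ f : ZMod n, G (-f) = G f) ∧
  (∀ f : ZMod n, 0 ≤ G f ∧ G f ≤ 1) ∧
  (∀ f : ZMod n, (|rep n f| : ℝ) ≤ (n : ℝ) / (2 * B) → 1 - (1 / 4 : ℝ) ^ (F - 1) ≤ G f) ∧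
  (∀ f : ZMod n, (n : ℝ) / B ≤ (|rep n f| : ℝ) →
    G f ≤ (1 / 4 : ℝ) ^ (F - 1) * ((n : ℝ) / (B * (|rep n f| : ℝ))) ^ (F - 1))

/-- Discrete Fourier transform on `Z_n`. -/
noncomputable def dftZ (n : ℕ) [NeZero n] (x : ZMod n → ℂ) : ZMod n → ℂ := fun f =>
  (1 / (Real.sqrt n) : ℂ) *
    ∑ j : ZMod n, x j * Complex.exp (2 * (Real.pi : ℂ) * Complex.I *
      ((j.val * f.val : ℕ) : ℂ) / (n : ℂ))

/-- The value `(m_r)_{h_r(f)}` of the `r`-th measurement vector at bucket `h_r(f)`: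
`∑_{f'} Ĝ_{o_{f,σ,b}(f')} x̂_{f'}`. -/
noncomputable def measAt (n B : ℕ) [NeZero n] (G : ZMod n → ℝ) (σ b f : ZMod n)
    (xhat : ZMod n → ℂ) : ℂ :=
  ∑ f' : ZMod n, (G (offset n B σ b f f') : ℂ) * xhat f'

/-- Uniform sample space of hashing pairs `(σ, b)` with `σ` odd. -/
def hashPairs (n : ℕ) [NeZero n] : Finset (ZMod n × ZMod n) :=
  (Finset.univ.filter fun σ : ZMod n => Odd σ.val) ×ˢ Finset.univ


section RepLemmas
variable {n : ℕ} [NeZero n]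

lemma rep_cast (ℓ : ZMod n) : ((rep n ℓ : ℤ) : ZMod n) = ℓ := by
  unfold rep
  split <;> push_cast <;> simp [ZMod.natCast_val, ZMod.natCast_self, ZMod.natCast_rightInverse ℓ]

lemma rep_bounds (hn : 2 ∣ n) (ℓ : ZMod n) :
    -(n:ℤ) < 2 * rep n ℓ ∧ 2 * rep n ℓ ≤ n := by
  have hv : ℓ.val < n := ZMod.val_lt ℓ
  obtain ⟨e, rfl⟩ := hn
  unfold rep
  split <;> push_cast <;> omega

lemma rep_abs (hn : 2 ∣ n) (ℓ : ZMod n) :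
    |rep n ℓ| = min (ℓ.val : ℤ) ((n:ℤ) - ℓ.val) := by
  have hv : ℓ.val < n := ZMod.val_lt ℓ
  obtain ⟨e, rfl⟩ := hn
  unfold rep
  split <;> push_cast <;> [skip; skip] <;> rw [abs_eq (by push_cast; omega)] <;> push_cast <;> omega

lemma int_eq_zero_of_dvd_of_abs_lt {m x : ℤ} (h : m ∣ x) (h2 : |x| < m) : x = 0 := by
  rcases h with ⟨j, rfl⟩
  rcases eq_or_ne j 0 with rfl | hj
  · ring
  · exfalso
    have : m ≤ |m * j| := by
      rw [abs_mul]
      nlinarith [abs_pos.mpr hj, abs_nonneg m, abs_nonneg j, le_abs_self m, abs_nonneg (m*j)]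
    omega

lemma rep_eq_of_cast (hn : 2 ∣ n) {t : ℤ} {ℓ : ZMod n} (ht : (t : ZMod n) = ℓ)
    (h1 : -(n:ℤ) < 2 * t) (h2 : 2 * t ≤ n) : rep n ℓ = t := by
  have hd : (n:ℤ) ∣ (rep n ℓ - t) := by
    rw [← ZMod.intCast_zmod_eq_zero_iff_dvd]
    push_cast
    rw [rep_cast, ht]
    ring
  have hb := rep_bounds hn ℓ
  have h0 : rep n ℓ - t = 0 := by
    apply int_eq_zero_of_dvd_of_abs_lt hd
    rw [abs_lt]
    constructor <;> omega
  omega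

end RepLemmas

section OffsetLemmas
variable {n B : ℕ} [NeZero n]

lemma offset_split (σ b f f' : ZMod n) :
    offset n B σ b f f' = offset n B σ b f f + σ * (f' - f) := by
  unfold offset; ring

lemma rep_offset_diag (hB : B ∣ n) (hB2 : 2 ≤ B) (hn : 2 ∣ n) (σ b f : ZMod n) :
    2 * (B:ℤ) * |rep n (offset n B σ b f f)| ≤ n := by
  have hn0 : 0 < n := Nat.pos_of_ne_zero (NeZero.ne n)
  have hB0 : (0:ℝ) < B := by positivity
  have hn0' : (0:ℝ) < n := by exact_mod_cast hn0
  set v : ℕ := (σ * (f - b)).val with hv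
  set h : ℤ := hround n B σ b f with hh
  set t : ℤ := (v : ℤ) - ((n / B : ℕ) : ℤ) * h with hts
  have hvz : ((v:ℕ) : ZMod n) = σ * (f - b) := by
    rw [hv]; exact ZMod.natCast_rightInverse _
  have hcast : offset n B σ b f f = ((t : ℤ) : ZMod n) := by
    have h2 : ((t : ℤ) : ZMod n) = ((v:ℕ) : ZMod n) - ((n/B : ℕ) : ZMod n) * ((h:ℤ) : ZMod n) := by
      rw [hts, Int.cast_sub, Int.cast_mul, Int.cast_natCast, Int.cast_natCast]
    rw [h2, hvz]; rfl
  have hnB : ((n / B : ℕ) : ℝ) = (n : ℝ) / B := by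
    rw [Nat.cast_div hB (by positivity)]
  -- real bound on t
  have hround_bd : |(B:ℝ)/n * v - h| ≤ 1/2 := by
    rw [hh, hround]
    exact abs_sub_round _
  have htR : |(t:ℝ)| ≤ (n:ℝ)/(2*B) := by
    have : (t:ℝ) = (n:ℝ)/B * ((B:ℝ)/n * v - h) := by
      rw [hts, Int.cast_sub, Int.cast_mul, Int.cast_natCast, Int.cast_natCast, hnB]
      field_simp
    rw [this, abs_mul, abs_of_pos (by positivity)]
    calc (n:ℝ)/B * |(B:ℝ)/n * v - h| ≤ (n:ℝ)/B * (1/2) :=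
          mul_le_mul_of_nonneg_left hround_bd (by positivity)
      _ = (n:ℝ)/(2*B) := by ring
  have hR2 : (2 : ℝ) * (B:ℝ) * |(t:ℝ)| ≤ n := by
    rw [le_div_iff₀ (by positivity : (0:ℝ) < 2*(B:ℝ))] at htR
    nlinarith [abs_nonneg (t:ℝ)]
  have htZ : 2 * (B:ℤ) * |t| ≤ n := by exact_mod_cast hR2
  -- rep equals t
  have hrep : rep n (offset n B σ b f f) = t := by
    apply rep_eq_of_cast hn hcast.symm <;> rcases abs_le.mp (le_of_eq rfl : |t| ≤ |t|) with ⟨h1, h2⟩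
    · nlinarith [abs_nonneg t, (by exact_mod_cast hn0 : (0:ℤ) < n), (by exact_mod_cast hB2 : (2:ℤ) ≤ B)]
    · nlinarith [abs_nonneg t, (by exact_mod_cast hn0 : (0:ℤ) < n), (by exact_mod_cast hB2 : (2:ℤ) ≤ B)]
  rw [hrep]; exact htZ

end OffsetLemmas

lemma rep_offset_nondiag {n B : ℕ} [NeZero n] (hB : B ∣ n) (hB2 : 2 ≤ B) (hn : 2 ∣ n)
    {σ b f f' : ZMod n}
    (hbad : 2 * (n:ℤ) ≤ (B:ℤ) * |rep n (σ * (f' - f))|) :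
    (n:ℤ) ≤ (B:ℤ) * |rep n (offset n B σ b f f')| := by
  have hn0 : (0:ℤ) < n := by exact_mod_cast Nat.pos_of_ne_zero (NeZero.ne n)
  have hBZ : (2:ℤ) ≤ B := by exact_mod_cast hB2
  set s := rep n (offset n B σ b f f) with hs
  set m0 := rep n (σ * (f' - f)) with hm0
  set ρ := rep n (offset n B σ b f f') with hρ
  have hsb : 2 * (B:ℤ) * |s| ≤ n := rep_offset_diag hB hB2 hn σ b f
  have hmabs : 2 * |m0| ≤ n := by
    have h1 := rep_bounds hn (σ * (f' - f))
    rw [← hm0] at h1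
    rcases abs_cases m0 with ⟨he, _⟩ | ⟨he, _⟩ <;> omega
  have hρabs : 2 * |ρ| ≤ n := by
    have h1 := rep_bounds hn (offset n B σ b f f')
    rw [← hρ] at h1
    rcases abs_cases ρ with ⟨he, _⟩ | ⟨he, _⟩ <;> omega
  have hsabs : 4 * |s| ≤ n := by nlinarith [abs_nonneg s]
  have hB4 : (4:ℤ) ≤ B := by nlinarith [abs_nonneg m0]
  have hd : (n:ℤ) ∣ (ρ - (m0 + s)) := by
    rw [← ZMod.intCast_zmod_eq_zero_iff_dvd]
    push_cast
    rw [hρ, hm0, hs, rep_cast, rep_cast, rep_cast, offset_split σ b f f']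
    ring
  obtain ⟨j, hj⟩ := hd
  have htri : |ρ - (m0 + s)| ≤ |ρ| + |m0| + |s| := by
    calc |ρ - (m0 + s)| ≤ |ρ| + |m0 + s| := abs_sub _ _
      _ ≤ |ρ| + (|m0| + |s|) := by gcongr; exact abs_add_le _ _
      _ = |ρ| + |m0| + |s| := by ring
  have hjabs : |j| ≤ 1 := by
    by_contra hc
    push_neg at hc
    have h2 : 2 ≤ |j| := hc
    have : 2 * n ≤ |(n:ℤ) * j| := by
      rw [abs_mul, abs_of_pos hn0]
      nlinarith
    rw [← hj] at this
    nlinarith [abs_nonneg s]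
  have hj1 : j = -1 ∨ j = 0 ∨ j = 1 := by
    rw [abs_le] at hjabs; omega
  rcases hj1 with rfl | rfl | rfl
  · -- ρ = m0 + s - n
    have : (n:ℤ) ≤ |ρ| + |m0| + |s| := by
      have : |ρ - (m0 + s)| = n := by rw [hj]; simp [abs_of_pos hn0]
      omega
    nlinarith [abs_nonneg ρ, abs_nonneg s, abs_nonneg m0]
  · have hre : ρ = m0 + s := by omega
    have habs : |m0| ≤ |ρ| + |s| := by
      calc |m0| = |ρ - s| := by rw [hre]; ring_nf
        _ ≤ |ρ| + |s| := abs_sub _ _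
    nlinarith [abs_nonneg ρ, abs_nonneg s]
  · have : (n:ℤ) ≤ |ρ| + |m0| + |s| := by
      have : |ρ - (m0 + s)| = n := by rw [hj]; simp [abs_of_pos hn0]
      omega
    nlinarith [abs_nonneg ρ, abs_nonneg s, abs_nonneg m0]

section Counting

lemma card_filter_zmod {n : ℕ} [NeZero n] (Q : ℕ → Prop) [DecidablePred Q] :
    (univ.filter fun τ : ZMod n => Q τ.val).card = ((range n).filter Q).card := by
  apply Finset.card_bij (fun τ _ => τ.val)
  · intro τ hτ
    simp only [mem_filter, mem_range] at *
    exact ⟨ZMod.val_lt τ, hτ.2⟩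
  · intro τ1 h1 τ2 h2 he
    exact ZMod.val_injective n he
  · intro t ht
    simp only [mem_filter, mem_range] at ht
    refine ⟨(t : ZMod n), ?_, ?_⟩
    · simp only [mem_filter, mem_univ, true_and]
      rw [ZMod.val_natCast_of_lt ht.1]; exact ht.2
    · rw [ZMod.val_natCast_of_lt ht.1]

lemma card_filter_range_mul (q m : ℕ) (hm : 0 < m) (P : ℕ → Prop) [DecidablePred P] :
    ((range (q * m)).filter fun t => P (t % m)).card = q * ((range m).filter P).card := by
  have hp2 : ((range q) ×ˢ ((range m).filter P)).card = q * ((range m).filter P).card := by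
    rw [Finset.card_product, Finset.card_range]
  rw [← hp2]
  apply Finset.card_bij' (fun t _ => ((t / m, t % m) : ℕ × ℕ))
      (fun p _ => p.1 * m + p.2)
  · intro t ht
    simp only [mem_filter, mem_range, mem_product] at *
    exact ⟨Nat.div_lt_iff_lt_mul hm |>.mpr ht.1, Nat.mod_lt _ hm, ht.2⟩
  · intro p hp
    simp only [mem_filter, mem_range, mem_product] at *
    have h2 : (p.1 * m + p.2) % m = p.2 := by
      rw [add_comm, Nat.add_mul_mod_self_right]; exact Nat.mod_eq_of_lt hp.2.1
    constructor
    · have : p.1 * m + p.2 < q * m := by nlinarith [hp.1, hp.2.1]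
      omega
    · rw [h2]; exact hp.2.2
  · intro t ht; simpa [mul_comm] using Nat.div_add_mod t m
  · intro p hp
    simp only [mem_filter, mem_range, mem_product] at hp
    have h2 : (p.1 * m + p.2) % m = p.2 := by
      rw [add_comm, Nat.add_mul_mod_self_right]; exact Nat.mod_eq_of_lt hp.2.1
    have h3 : (p.1 * m + p.2) / m = p.1 := by
      rw [add_comm, Nat.add_mul_div_right _ _ hm, Nat.div_eq_of_lt hp.2.1, zero_add]
    exact Prod.ext h3 h2

end Counting

lemma card_A_le {m B : ℕ} (hdvd : B ∣ m) :
    ((range m).filter fun o => Odd o ∧ B * o < 2 * m).card ≤ m / B := by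
  obtain ⟨m', rfl⟩ := hdvd
  by_cases hB0 : 0 < B
  swap
  · interval_cases B; simp
  rw [Nat.mul_div_cancel_left _ hB0]
  have : ((range (B * m')).filter fun o => Odd o ∧ B * o < 2 * (B * m')).card ≤ (range m').card := by
    apply Finset.card_le_card_of_injOn (fun o => o / 2)
    · intro o ho
      simp only [mem_coe, mem_filter, mem_range] at *
      obtain ⟨q, hq⟩ := ho.2.1
      have h1 : B * q < B * m' := by nlinarith [ho.2.2]
      have h2 : q < m' := Nat.lt_of_mul_lt_mul_left h1
      omega
    · intro o1 h1 o2 h2 he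
      simp only [coe_filter, Set.mem_setOf_eq, mem_range] at h1 h2
      rw [Nat.odd_iff] at h1 h2
      simp only at he
      omega
  simpa using this

lemma key_count {m B : ℕ} (hm : 2 ∣ m) {e c : ℕ} (hme : m = 2^e) (hBc : B = 2^c) :
    B * ((range m).filter fun w => Odd w ∧ B * min w (m - w) < 2 * m).card ≤ 2 * m := by
  by_cases hle : B ≤ m
  · have hdvd : B ∣ m := by
      rw [hme, hBc]
      exact pow_dvd_pow 2 (by
        have := (Nat.pow_le_pow_iff_right (le_refl 2)).mp (hBc ▸ hme ▸ hle)
        exact this)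
    set M := (range m).filter fun w => Odd w ∧ B * min w (m - w) < 2 * m with hM
    set A := (range m).filter fun o => Odd o ∧ B * o < 2 * m with hA
    have hsplit : M.card ≤ (M.filter fun w => 2 * w ≤ m).card + (M.filter fun w => ¬ (2 * w ≤ m)).card := by
      conv_lhs => rw [← Finset.filter_union_filter_not_eq (p := fun w => 2 * w ≤ m) M]
      exact Finset.card_union_le _ _
    have h1 : (M.filter fun w => 2 * w ≤ m) ⊆ A := by
      intro w hw
      simp only [hM, hA, mem_filter, mem_range, filter_filter] at *
      refine ⟨hw.1, hw.2.1.1, ?_⟩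
      have : min w (m - w) = w := min_eq_left (by omega)
      rw [this] at hw
      exact hw.2.1.2
    have h2 : (M.filter fun w => ¬ (2 * w ≤ m)).card ≤ A.card := by
      apply Finset.card_le_card_of_injOn (fun w => m - w)
      · intro w hw
        simp only [hM, hA, mem_coe, mem_filter, mem_range, filter_filter] at *
        have hwlt : w < m := hw.1
        have hodd : Odd w := hw.2.1.1
        have hge : ¬ (2 * w ≤ m) := hw.2.2
        have : min w (m - w) = m - w := min_eq_right (by omega)
        rw [this] at hw
        refine ⟨by omega, ?_, hw.2.1.2⟩
        exact Nat.Even.sub_odd (by omega) (even_iff_two_dvd.mpr hm) hodd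
      · intro w1 hw1 w2 hw2 he
        simp only [hM, coe_filter, Set.mem_setOf_eq, mem_filter, mem_range] at hw1 hw2
        simp only at he
        omega
    have hAle : A.card ≤ m / B := card_A_le hdvd
    have h1' := Finset.card_le_card h1
    have : M.card ≤ 2 * (m / B) := by omega
    calc B * M.card ≤ B * (2 * (m / B)) := Nat.mul_le_mul_left _ this
      _ = 2 * (B * (m / B)) := by ring
      _ = 2 * m := by rw [Nat.mul_div_cancel' hdvd]
  · -- B > m, filter is empty
    have hBge : 2 * m ≤ B := by
      rw [hme, hBc] at *
      have : e < c := by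
        by_contra hc
        push_neg at hc
        exact hle (Nat.pow_le_pow_right (by norm_num) hc)
      calc 2 * 2^e = 2^(e+1) := by ring
        _ ≤ 2^c := Nat.pow_le_pow_right (by norm_num) (by omega)
    have : ((range m).filter fun w => Odd w ∧ B * min w (m - w) < 2 * m) = ∅ := by
      rw [Finset.filter_eq_empty_iff]
      intro w hw
      simp only [mem_range] at hw
      rintro ⟨hodd, hlt⟩
      have h1 : 1 ≤ w := by
        rcases Nat.eq_zero_or_pos w with rfl | h
        · exact absurd hodd (by simp)
        · exact h
      have h2 : 1 ≤ m - w := by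
        have : w ≠ m := by
          rintro rfl
          rw [Nat.odd_iff] at hodd
          omega
        omega
      have : B * 1 ≤ B * min w (m - w) := Nat.mul_le_mul_left _ (by omega)
      omega
    rw [this]
    simp

lemma odd_val_mul {n : ℕ} [NeZero n] (hn : 2 ∣ n) (τ μ : ZMod n) :
    Odd ((τ * μ).val) ↔ (Odd τ.val ∧ Odd μ.val) := by
  rw [ZMod.val_mul, Nat.odd_iff, Nat.mod_mod_of_dvd _ hn, ← Nat.odd_iff, Nat.odd_mul]

def Rpred (B K n : ℕ) (x : ℕ) : Prop := Odd x ∧ B * min (K * x) (n - K * x) < 2 * n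

instance (B K n : ℕ) : DecidablePred (Rpred B K n) := fun _ => instDecidableAnd

lemma count_bad_sigma {n B a c : ℕ} [NeZero n] (hna : n = 2^a) (hBc : B = 2^c)
    (hB2 : 2 ≤ B) (hBn : B < n) {Δ : ZMod n} (hΔ : Δ ≠ 0) :
    B * ((univ.filter fun σ : ZMod n => Odd σ.val ∧ (B:ℤ) * |rep n (σ * Δ)| < 2 * (n:ℤ)).card)
      ≤ 2 * n := by
  have ha2 : 2 ≤ a := by
    by_contra h
    push_neg at h
    interval_cases a <;> rw [hna] at hBn <;> norm_num at hBn <;> omega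
  have ha1 : 1 ≤ a := by omega
  have hn4 : 4 ≤ n := by
    rw [hna]
    calc 4 = 2^2 := rfl
      _ ≤ 2^a := Nat.pow_le_pow_right (by norm_num) ha2
  have hn2 : 2 ∣ n := by rw [hna]; exact dvd_pow_self 2 (by omega)
  have hv0 : Δ.val ≠ 0 := by
    intro h
    exact hΔ (by rwa [← ZMod.val_eq_zero])
  obtain ⟨k, u, hu2, hval⟩ := Nat.exists_eq_pow_mul_and_not_dvd hv0 2 (by norm_num)
  have hu1 : 1 ≤ u := by
    rcases Nat.eq_zero_or_pos u with rfl | h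
    · exact absurd (dvd_zero 2) hu2
    · exact h
  have hvlt : Δ.val < n := ZMod.val_lt Δ
  have hkn : 2^k < n := by
    have h1 : 2^k ≤ 2^k * u := Nat.le_mul_of_pos_right _ hu1
    omega
  have hka : k < a := by
    have h2 : 2^k < 2^a := by rw [← hna]; exact hkn
    exact (Nat.pow_lt_pow_iff_right (by norm_num)).mp h2
  set m := 2^(a - k) with hm
  have hm2 : 2 ∣ m := by rw [hm]; exact dvd_pow_self 2 (by omega)
  have hnm : n = 2^k * m := by rw [hna, hm, ← pow_add]; congr 1; omega
  have hm0 : 0 < m := by positivity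
  have hk0 : 0 < 2^k := by positivity
  have huodd : Odd u := Nat.odd_iff.mpr (by
    rcases Nat.mod_two_eq_zero_or_one u with h | h
    · exact absurd (Nat.dvd_of_mod_eq_zero h) hu2
    · exact h)
  have hun : u < n := by
    have : u ≤ 2^k * u := Nat.le_mul_of_pos_left _ hk0
    omega
  have hUval : ((u : ZMod n)).val = u := ZMod.val_natCast_of_lt hun
  have hUodd : Odd ((u : ZMod n)).val := by rw [hUval]; exact huodd
  have hU : IsUnit ((u : ZMod n)) := by
    rw [ZMod.isUnit_iff_coprime]
    rw [hna]
    exact Nat.Coprime.pow_right _ (huodd.coprime_two_right)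
  obtain ⟨w, hw⟩ := hU
  have hwodd : Odd ((↑w : ZMod n)).val := by rw [hw]; exact hUodd
  have hwinv_odd : Odd ((↑w⁻¹ : ZMod n)).val := by
    have h1 : ((↑w : ZMod n) * (↑w⁻¹ : ZMod n)).val = (1 : ZMod n).val := by
      rw [w.mul_inv]
    have h2 : Odd (((↑w : ZMod n) * (↑w⁻¹ : ZMod n)).val) := by
      rw [h1, ZMod.val_one_eq_one_mod, Nat.mod_eq_of_lt (by omega)]
      exact odd_one
    exact ((odd_val_mul hn2 _ _).mp h2).2
  have hΔdec : Δ = ((2^k : ℕ) : ZMod n) * ((u : ℕ) : ZMod n) := by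
    conv_lhs => rw [← ZMod.natCast_rightInverse Δ, hval]
    push_cast
    ring
  -- Step A: substitute τ = σ * u
  have hstepA : (univ.filter fun σ : ZMod n => Odd σ.val ∧ (B:ℤ) * |rep n (σ * Δ)| < 2 * (n:ℤ)).card
      = (univ.filter fun τ : ZMod n => Odd τ.val ∧ (B:ℤ) * |rep n (τ * ((2^k : ℕ) : ZMod n))| < 2 * (n:ℤ)).card := by
    apply Finset.card_bij' (fun σ _ => σ * ((u : ℕ) : ZMod n)) (fun τ _ => τ * ↑w⁻¹)
    · intro σ hσ
      simp only [mem_filter, mem_univ, true_and] at *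
      constructor
      · exact (odd_val_mul hn2 σ _).mpr ⟨hσ.1, hUodd⟩
      · have : σ * ((u:ℕ) : ZMod n) * ((2^k : ℕ) : ZMod n) = σ * Δ := by rw [hΔdec]; ring
        rw [this]
        exact hσ.2
    · intro τ hτ
      simp only [mem_filter, mem_univ, true_and] at *
      constructor
      · exact (odd_val_mul hn2 τ _).mpr ⟨hτ.1, hwinv_odd⟩
      · have : τ * ↑w⁻¹ * Δ = τ * ((2^k : ℕ) : ZMod n) * ((↑w⁻¹ : ZMod n) * ↑w) := by
          rw [hΔdec, hw]; ring
        rw [this, w.inv_mul, mul_one]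
        exact hτ.2
    · intro σ hσ
      have : σ * ((u:ℕ) : ZMod n) * ↑w⁻¹ = σ * ((↑w : ZMod n) * ↑w⁻¹) := by rw [hw]; ring
      rw [this, w.mul_inv, mul_one]
    · intro τ hτ
      have : τ * ↑w⁻¹ * ((u:ℕ) : ZMod n) = τ * ((↑w⁻¹ : ZMod n) * ↑w) := by rw [hw]; ring
      rw [this, w.inv_mul, mul_one]
  rw [hstepA]
  -- Step B: reduce to counting mod m
  have hstepB : ∀ τ : ZMod n,
      (Odd τ.val ∧ (B:ℤ) * |rep n (τ * ((2^k : ℕ) : ZMod n))| < 2 * (n:ℤ)) ↔ Rpred B (2^k) n (τ.val % m) := by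
    intro τ
    set ζ := τ * ((2^k : ℕ) : ZMod n) with hζ
    have hmod : ∀ t : ℕ, (2^k * t) % n = 2^k * (t % m) := by
      intro t
      rw [hnm]
      exact Nat.mul_mod_mul_left _ _ _
    have hvz : ζ.val = 2^k * (τ.val % m) := by
      rw [hζ, ZMod.val_mul, ZMod.val_natCast_of_lt hkn, mul_comm τ.val (2^k)]
      exact hmod τ.val
    have hvle : ζ.val < n := ZMod.val_lt ζ
    have habs : |rep n ζ| = ((min (ζ.val) (n - ζ.val) : ℕ) : ℤ) := by
      rw [rep_abs hn2]
      push_cast [Nat.cast_min, Nat.cast_sub (le_of_lt hvle)]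
      rfl
    have hcond : ((B:ℤ) * |rep n ζ| < 2 * (n:ℤ)) ↔
        B * min (2^k * (τ.val % m)) (n - 2^k * (τ.val % m)) < 2*n := by
      rw [habs, ← hvz]
      constructor
      · intro h; exact_mod_cast h
      · intro h; exact_mod_cast h
    have hodd : Odd τ.val ↔ Odd (τ.val % m) := by
      rw [Nat.odd_iff, Nat.odd_iff, Nat.mod_mod_of_dvd _ hm2]
    unfold Rpred
    rw [hcond, hodd]
  rw [Finset.filter_congr (fun τ _ => hstepB τ)]
  have hcard1 : (univ.filter fun τ : ZMod n => Rpred B (2^k) n (τ.val % m)).card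
      = ((range n).filter fun t => Rpred B (2^k) n (t % m)).card :=
    card_filter_zmod (fun t => Rpred B (2^k) n (t % m))
  rw [hcard1]
  have hcard2 : ((range n).filter fun t => Rpred B (2^k) n (t % m)).card
      = 2^k * ((range m).filter (Rpred B (2^k) n)).card := by
    have h := card_filter_range_mul (2^k) m hm0 (Rpred B (2^k) n)
    rw [← hnm] at h
    exact h
  rw [hcard2]
  have hsame : ((range m).filter (Rpred B (2^k) n))
      = ((range m).filter fun x => Odd x ∧ B * min x (m - x) < 2 * m) := by
    apply Finset.filter_congr
    intro x hx
    simp only [mem_range] at hx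
    unfold Rpred
    have hmin : min (2^k * x) (n - 2^k * x) = 2^k * min x (m - x) := by
      have hsub : n - 2^k * x = 2^k * (m - x) := by rw [hnm, Nat.mul_sub]
      rcases le_total x (m - x) with h | h
      · rw [min_eq_left h, min_eq_left (by rw [hsub]; exact Nat.mul_le_mul_left _ h)]
      · rw [min_eq_right h, min_eq_right (by rw [hsub]; exact Nat.mul_le_mul_left _ h), hsub]
    rw [hmin]
    constructor
    · rintro ⟨h1, h2⟩
      refine ⟨h1, ?_⟩
      have h3 : 2^k * (B * min x (m - x)) < 2^k * (2 * m) := by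
        calc 2^k * (B * min x (m-x)) = B * (2^k * min x (m-x)) := by ring
          _ < 2 * n := h2
          _ = 2^k * (2 * m) := by rw [hnm]; ring
      exact Nat.lt_of_mul_lt_mul_left h3
    · rintro ⟨h1, h2⟩
      refine ⟨h1, ?_⟩
      calc B * (2^k * min x (m-x)) = 2^k * (B * min x (m-x)) := by ring
        _ < 2^k * (2 * m) := by exact (Nat.mul_lt_mul_left hk0).mpr h2
        _ = 2 * n := by rw [hnm]; ring
  rw [hsame]
  calc B * (2^k * ((range m).filter fun x => Odd x ∧ B * min x (m - x) < 2 * m).card)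
      = 2^k * (B * ((range m).filter fun x => Odd x ∧ B * min x (m - x) < 2 * m).card) := by ring
    _ ≤ 2^k * (2 * m) := Nat.mul_le_mul_left _ (key_count hm2 rfl hBc)
    _ = 2 * n := by rw [hnm]; ring

lemma exists_family {n B a c : ℕ} [NeZero n] (hna : n = 2^a) (hBc : B = 2^c)
    (hB2 : 2 ≤ B) (hBn : B < n) (d : ℕ) (hd : (B:ℝ) * Real.log n ≤ d) :
    ∃ σ : Fin d → ZMod n, (∀ r, Odd (σ r).val) ∧
      ∀ Δ : ZMod n, Δ ≠ 0 →
        ((univ.filter fun r : Fin d =>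
            (B:ℤ) * |rep n ((σ r) * Δ)| < 2*(n:ℤ)).card : ℝ) ≤ 17 * d / B := by
  have ha2 : 2 ≤ a := by
    by_contra h
    push_neg at h
    interval_cases a <;> rw [hna] at hBn <;> norm_num at hBn <;> omega
  have hn4 : 4 ≤ n := by
    rw [hna]
    calc 4 = 2^2 := rfl
      _ ≤ 2^a := Nat.pow_le_pow_right (by norm_num) ha2
  have hn2 : 2 ∣ n := by rw [hna]; exact dvd_pow_self 2 (by omega)
  have hB0 : (0:ℝ) < B := by positivity
  have hn0R : (0:ℝ) < n := by positivity
  have hlogn : 1 ≤ Real.log n := by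
    rw [Real.le_log_iff_exp_le hn0R]
    calc Real.exp 1 ≤ 2.7182818286 := (Real.exp_one_lt_d9).le
      _ ≤ 4 := by norm_num
      _ ≤ n := by exact_mod_cast hn4
  have hdB : Real.log n ≤ (d:ℝ)/B := by
    rw [le_div_iff₀ hB0]
    linarith [hd]
  have hdB1 : 1 ≤ (d:ℝ)/B := le_trans hlogn hdB
  have hdB0 : 0 < (d:ℝ)/B := by linarith
  set S := (univ.filter fun σ : ZMod n => Odd σ.val) with hS
  have hScard : n ≤ 2 * S.card := by
    have h1 : S.card = ((range n).filter Odd).card := card_filter_zmod Odd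
    have h2 : n / 2 ≤ ((range n).filter Odd).card := by
      have h := Finset.card_le_card_of_injOn (s := range (n/2)) (t := (range n).filter Odd)
        (fun q => 2*q + 1)
        (fun q hq => by
          simp only [mem_coe, mem_range, mem_filter] at *
          exact ⟨by omega, ⟨q, by ring⟩⟩)
        (fun q1 _ q2 _ h => by simp only at h; omega)
      simpa using h
    omega
  set s : ℝ := (S.card : ℝ) with hsdef
  have hs2 : (2:ℝ) ≤ s := by
    have h9 : 2 ≤ S.card := by omega
    rw [hsdef]
    exact_mod_cast h9
  have hs0 : 0 < s := by linarith
  set T : ℕ := ⌈(16:ℝ) * d / B⌉₊ with hT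
  set Ω := Fintype.piFinset (fun _ : Fin d => S) with hΩ
  have hΩcard : (Ω.card : ℝ) = s ^ d := by
    rw [hΩ, Fintype.card_piFinset]
    push_cast
    rw [Finset.prod_const, Finset.card_univ, Fintype.card_fin]
  -- moment computation
  have hmoment : ∀ Δ : ZMod n,
      ∑ ω ∈ Ω, (2:ℝ) ^ ((univ.filter fun r : Fin d => (B:ℤ) * |rep n ((ω r) * Δ)| < 2*(n:ℤ)).card)
        = (s + ((S.filter fun σ => (B:ℤ) * |rep n (σ * Δ)| < 2*(n:ℤ)).card : ℝ)) ^ d := by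
    intro Δ
    have h1 : ∀ ω : Fin d → ZMod n,
        (2:ℝ) ^ ((univ.filter fun r : Fin d => (B:ℤ) * |rep n ((ω r) * Δ)| < 2*(n:ℤ)).card)
          = ∏ r : Fin d, (if (B:ℤ) * |rep n ((ω r) * Δ)| < 2*(n:ℤ) then (2:ℝ) else 1) := by
      intro ω
      rw [Finset.prod_ite, Finset.prod_const, Finset.prod_const, one_pow, mul_one]
    rw [Finset.sum_congr rfl (fun ω _ => h1 ω), hΩ]
    have hps := Finset.prod_univ_sum (κ := fun _ : Fin d => ZMod n) (fun _ : Fin d => S)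
      (fun _ σ => if (B:ℤ) * |rep n (σ * Δ)| < 2*(n:ℤ) then (2:ℝ) else 1)
    rw [← hps]
    have h2 : ∑ σ ∈ S, (if (B:ℤ) * |rep n (σ * Δ)| < 2*(n:ℤ) then (2:ℝ) else 1)
        = s + ((S.filter fun σ => (B:ℤ) * |rep n (σ * Δ)| < 2*(n:ℤ)).card : ℝ) := by
      rw [Finset.sum_ite, Finset.sum_const, Finset.sum_const]
      have h3 := Finset.card_filter_add_card_filter_not
        (s := S) (p := fun σ => (B:ℤ) * |rep n (σ * Δ)| < 2*(n:ℤ))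
      have h3' : ((S.filter fun σ => (B:ℤ) * |rep n (σ * Δ)| < 2*(n:ℤ)).card : ℝ)
          + ((S.filter fun σ => ¬((B:ℤ) * |rep n (σ * Δ)| < 2*(n:ℤ))).card : ℝ) = (S.card : ℝ) := by
        exact_mod_cast h3
      simp only [nsmul_eq_mul, mul_one]
      rw [hsdef]
      linarith
    rw [Finset.prod_congr rfl (fun r _ => h2)]
    rw [Finset.prod_const, Finset.card_univ, Fintype.card_fin]
  -- per-Δ count bound
  have hcount : ∀ Δ : ZMod n, Δ ≠ 0 →
      ((S.filter fun σ => (B:ℤ) * |rep n (σ * Δ)| < 2*(n:ℤ)).card : ℝ) ≤ 4 * s / B := by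
    intro Δ hΔ
    have h1 : S.filter (fun σ => (B:ℤ) * |rep n (σ * Δ)| < 2*(n:ℤ))
        = univ.filter fun σ : ZMod n => Odd σ.val ∧ (B:ℤ) * |rep n (σ * Δ)| < 2*(n:ℤ) := by
      rw [hS, Finset.filter_filter]
    rw [h1]
    have h2 := count_bad_sigma hna hBc hB2 hBn hΔ
    have h3 : (B:ℝ) * ((univ.filter fun σ : ZMod n => Odd σ.val ∧ (B:ℤ) * |rep n (σ * Δ)| < 2*(n:ℤ)).card : ℝ)
        ≤ 2 * n := by exact_mod_cast h2
    rw [le_div_iff₀ hB0]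
    have h4 : (n:ℝ) ≤ 2 * s := by
      rw [hsdef]
      exact_mod_cast hScard
    nlinarith
  -- Markov bound per Δ
  have hmarkov : ∀ Δ : ZMod n, Δ ≠ 0 →
      ((Ω.filter fun ω => T ≤ ((univ.filter fun r : Fin d =>
          (B:ℤ) * |rep n ((ω r) * Δ)| < 2*(n:ℤ)).card)).card : ℝ) * 2^T
        ≤ s ^ d * Real.exp (4 * d / B) := by
    intro Δ hΔ
    have h1 : ((Ω.filter fun ω => T ≤ ((univ.filter fun r : Fin d =>
          (B:ℤ) * |rep n ((ω r) * Δ)| < 2*(n:ℤ)).card)).card : ℝ) * 2^T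
        ≤ ∑ ω ∈ Ω, (2:ℝ) ^ ((univ.filter fun r : Fin d => (B:ℤ) * |rep n ((ω r) * Δ)| < 2*(n:ℤ)).card) := by
      calc ((Ω.filter fun ω => T ≤ ((univ.filter fun r : Fin d =>
              (B:ℤ) * |rep n ((ω r) * Δ)| < 2*(n:ℤ)).card)).card : ℝ) * 2^T
          = ∑ _ω ∈ (Ω.filter fun ω => T ≤ ((univ.filter fun r : Fin d =>
              (B:ℤ) * |rep n ((ω r) * Δ)| < 2*(n:ℤ)).card)), (2:ℝ)^T := by
            rw [Finset.sum_const, nsmul_eq_mul]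
        _ ≤ ∑ ω ∈ (Ω.filter fun ω => T ≤ ((univ.filter fun r : Fin d =>
              (B:ℤ) * |rep n ((ω r) * Δ)| < 2*(n:ℤ)).card)),
              (2:ℝ) ^ ((univ.filter fun r : Fin d => (B:ℤ) * |rep n ((ω r) * Δ)| < 2*(n:ℤ)).card) := by
            apply Finset.sum_le_sum
            intro ω hω
            simp only [Finset.mem_filter] at hω
            exact pow_le_pow_right₀ one_le_two hω.2
        _ ≤ ∑ ω ∈ Ω, (2:ℝ) ^ ((univ.filter fun r : Fin d => (B:ℤ) * |rep n ((ω r) * Δ)| < 2*(n:ℤ)).card) := by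
            apply Finset.sum_le_sum_of_subset_of_nonneg (Finset.filter_subset _ _)
            intro ω _ _
            positivity
    rw [hmoment Δ] at h1
    have h2 : (s + ((S.filter fun σ => (B:ℤ) * |rep n (σ * Δ)| < 2*(n:ℤ)).card : ℝ)) ^ d
        ≤ s ^ d * Real.exp (4 * d / B) := by
      have h3 : s + ((S.filter fun σ => (B:ℤ) * |rep n (σ * Δ)| < 2*(n:ℤ)).card : ℝ)
          ≤ s * (1 + 4 / B) := by
        have := hcount Δ hΔ
        have h4 : 4 * s / B = s * (4 / B) := by ring
        rw [h4] at this
        linarith [this]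
      calc (s + ((S.filter fun σ => (B:ℤ) * |rep n (σ * Δ)| < 2*(n:ℤ)).card : ℝ)) ^ d
          ≤ (s * (1 + 4 / B)) ^ d := by
            apply pow_le_pow_left₀ (by positivity) h3
        _ = s ^ d * (1 + 4/B) ^ d := by rw [mul_pow]
        _ ≤ s ^ d * Real.exp (4/B) ^ d := by
            apply mul_le_mul_of_nonneg_left _ (by positivity)
            apply pow_le_pow_left₀ (by positivity)
            linarith [Real.add_one_le_exp (4/(B:ℝ))]
        _ = s ^ d * Real.exp (4 * d / B) := by
            rw [← Real.exp_nat_mul]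
            congr 1
            ring
    exact le_trans h1 h2
  -- numeric bound
  have h2T0 : (0:ℝ) < 2^T := by positivity
  have hnum : (n:ℝ) * Real.exp (4 * d / B) < 2^T := by
    have hT16 : (16:ℝ) * d / B ≤ T := Nat.le_ceil _
    have hlog2 : (0.6875:ℝ) ≤ Real.log 2 := by linarith [Real.log_two_gt_d9]
    have h2Te : (2:ℝ)^T = Real.exp ((T:ℕ) * Real.log 2) := by
      rw [Real.exp_nat_mul, Real.exp_log (by norm_num : (0:ℝ) < 2)]
    have hexp : (n:ℝ) * Real.exp (4*d/B) = Real.exp (Real.log n + 4*d/B) := by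
      rw [Real.exp_add, Real.exp_log hn0R]
    rw [hexp, h2Te]
    apply Real.exp_lt_exp.mpr
    have h1 : Real.log n + 4*(d:ℝ)/B ≤ 5 * ((d:ℝ)/B) := by
      have he : 4*(d:ℝ)/B = 4*((d:ℝ)/B) := by ring
      linarith [hdB]
    have h2 : (11:ℝ) * ((d:ℝ)/B) ≤ (T:ℝ) * Real.log 2 := by
      calc (11:ℝ)*((d:ℝ)/B) = (16*(d:ℝ)/B) * 0.6875 := by ring
        _ ≤ (T:ℝ) * Real.log 2 :=
            mul_le_mul hT16 hlog2 (by norm_num) (Nat.cast_nonneg T)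
    linarith [hdB0]
  -- union bound
  set BadSet := Ω.filter (fun ω => ∃ Δ : ZMod n, Δ ≠ 0 ∧
      T ≤ ((univ.filter fun r : Fin d => (B:ℤ) * |rep n ((ω r) * Δ)| < 2*(n:ℤ)).card)) with hBadset
  have hsubset : BadSet ⊆ (univ.erase (0 : ZMod n)).biUnion
      (fun Δ => Ω.filter fun ω => T ≤ ((univ.filter fun r : Fin d =>
        (B:ℤ) * |rep n ((ω r) * Δ)| < 2*(n:ℤ)).card)) := by
    intro ω hω
    rw [hBadset, Finset.mem_filter] at hω
    obtain ⟨hΩm, Δ, hΔ, hX⟩ := hω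
    exact Finset.mem_biUnion.mpr ⟨Δ, Finset.mem_erase.mpr ⟨hΔ, mem_univ _⟩,
      Finset.mem_filter.mpr ⟨hΩm, hX⟩⟩
  have hBadcard : (BadSet.card : ℝ) < (Ω.card : ℝ) := by
    have h1 : BadSet.card ≤ ∑ Δ ∈ univ.erase (0:ZMod n),
        (Ω.filter fun ω => T ≤ ((univ.filter fun r : Fin d =>
          (B:ℤ) * |rep n ((ω r) * Δ)| < 2*(n:ℤ)).card)).card :=
      le_trans (Finset.card_le_card hsubset) (Finset.card_biUnion_le)
    have h2 : (BadSet.card : ℝ) ≤ ∑ Δ ∈ univ.erase (0:ZMod n),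
        ((Ω.filter fun ω => T ≤ ((univ.filter fun r : Fin d =>
          (B:ℤ) * |rep n ((ω r) * Δ)| < 2*(n:ℤ)).card)).card : ℝ) := by
      push_cast
      exact_mod_cast h1
    have h3 : ∀ Δ ∈ univ.erase (0:ZMod n),
        ((Ω.filter fun ω => T ≤ ((univ.filter fun r : Fin d =>
          (B:ℤ) * |rep n ((ω r) * Δ)| < 2*(n:ℤ)).card)).card : ℝ)
          ≤ s ^ d * Real.exp (4 * d / B) / 2^T := by
      intro Δ hΔm
      have hΔ : Δ ≠ 0 := (Finset.mem_erase.mp hΔm).1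
      rw [le_div_iff₀ h2T0]
      exact hmarkov Δ hΔ
    have h4 : (BadSet.card : ℝ) ≤ ((univ.erase (0:ZMod n)).card : ℝ)
        * (s ^ d * Real.exp (4 * d / B) / 2^T) := by
      calc (BadSet.card : ℝ) ≤ _ := h2
        _ ≤ ∑ _Δ ∈ univ.erase (0:ZMod n), (s ^ d * Real.exp (4 * d / B) / 2^T) :=
            Finset.sum_le_sum h3
        _ = ((univ.erase (0:ZMod n)).card : ℝ) * (s ^ d * Real.exp (4 * d / B) / 2^T) := by
            rw [Finset.sum_const, nsmul_eq_mul]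
    have h5 : ((univ.erase (0:ZMod n)).card : ℝ) ≤ n := by
      have := Finset.card_le_univ (univ.erase (0:ZMod n))
      have hcu : Fintype.card (ZMod n) = n := ZMod.card n
      calc ((univ.erase (0:ZMod n)).card : ℝ) ≤ (Fintype.card (ZMod n) : ℝ) := by exact_mod_cast this
        _ = n := by rw [hcu]
    have hKnn : (0:ℝ) ≤ s ^ d * Real.exp (4 * d / B) / 2^T := by
      have hsd : (0:ℝ) ≤ s ^ d := pow_nonneg (le_of_lt hs0) d
      have hexp0 : (0:ℝ) < Real.exp (4 * d / B) := Real.exp_pos _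
      exact div_nonneg (mul_nonneg hsd hexp0.le) (le_of_lt h2T0)
    have h6 : (BadSet.card : ℝ) ≤ (n:ℝ) * (s ^ d * Real.exp (4 * d / B) / 2^T) := by
      apply le_trans h4
      exact mul_le_mul_of_nonneg_right h5 hKnn
    have h7 : (n:ℝ) * (s ^ d * Real.exp (4 * d / B) / 2^T) < s ^ d := by
      have hsd : (0:ℝ) < s ^ d := pow_pos hs0 d
      calc (n:ℝ) * (s ^ d * Real.exp (4 * d / B) / 2^T)
          = ((n:ℝ) * Real.exp (4 * d / B)) * (s ^ d / 2^T) := by ring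
        _ < (2^T) * (s ^ d / 2^T) := by
            exact mul_lt_mul_of_pos_right hnum (div_pos hsd h2T0)
        _ = s ^ d := by
            rw [mul_comm, div_mul_cancel₀ _ (ne_of_gt h2T0)]
    rw [hΩcard]
    linarith
  have hgood : ∃ ω ∈ Ω, ∀ Δ : ZMod n, Δ ≠ 0 →
      ((univ.filter fun r : Fin d => (B:ℤ) * |rep n ((ω r) * Δ)| < 2*(n:ℤ)).card) < T := by
    by_contra hc
    push_neg at hc
    have hsub2 : Ω ⊆ BadSet := by
      intro ω hω
      rw [hBadset, Finset.mem_filter]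
      obtain ⟨Δ, hΔ, hX⟩ := hc ω hω
      exact ⟨hω, Δ, hΔ, hX⟩
    have := Finset.card_le_card hsub2
    have : (Ω.card : ℝ) ≤ (BadSet.card : ℝ) := by exact_mod_cast this
    linarith
  obtain ⟨ω, hωΩ, hωgood⟩ := hgood
  refine ⟨ω, ?_, ?_⟩
  · intro r
    have hm := Fintype.mem_piFinset.mp (by rwa [hΩ] at hωΩ) r
    rw [hS, Finset.mem_filter] at hm
    exact hm.2
  · intro Δ hΔ
    have hXT := hωgood Δ hΔ
    have h1 : (((univ.filter fun r : Fin d =>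
        (B:ℤ) * |rep n ((ω r) * Δ)| < 2*(n:ℤ)).card : ℕ) : ℝ) < (T:ℝ) := by exact_mod_cast hXT
    have h2 : (T:ℝ) < 16 * d / B + 1 := by
      rw [hT]
      exact Nat.ceil_lt_add_one (by positivity)
    have h3 : (16:ℝ) * d / B + 1 ≤ 17 * d / B := by
      have he1 : (16:ℝ)*d/B = 16*((d:ℝ)/B) := by ring
      have he2 : (17:ℝ)*d/B = 17*((d:ℝ)/B) := by ring
      rw [he1, he2]
      linarith [hdB1]
    linarith

/-- Existence of a deterministic hash family (the derandomized construction): there are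
absolute constants `C, C' ≥ 1` such that for all powers of two `2 ≤ B < n`, any even `F ≥ 2`
with `(1/4)^{F-1} ≤ 1/B`, any flat filter `Ĝ` with `B` buckets and sharpness `F`, and any
integer `d ≥ C B log n`, there exist hashings `(σ_r, b_r)`, `r ∈ [d]`, with each `σ_r` odd,
such that `∑_r Ĝ_{o_{f,r}(f)}⁻¹ Ĝ_{o_{f,r}(f')} ≤ C' d/B` for all `f ≠ f'`. -/
theorem exists_good_hash_family :
    ∃ C C' : ℝ, 1 ≤ C ∧ 1 ≤ C' ∧
      ∀ a c n B : ℕ, n = 2 ^ a → B = 2 ^ c → 2 ≤ B → B < n →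
        ∀ F : ℕ, 2 ≤ F → Even F → ((1 / 4 : ℝ)) ^ (F - 1) ≤ 1 / B →
          ∀ G : ZMod n → ℝ, IsFlatFilter n B F G →
            ∀ d : ℕ, C * B * Real.log n ≤ d →
              ∃ σ bb : Fin d → ZMod n, (∀ r, Odd (σ r).val) ∧
                ∀ f f' : ZMod n, f ≠ f' →
                  ∑ r : Fin d, (G (offset n B (σ r) (bb r) f f))⁻¹ *
                    G (offset n B (σ r) (bb r) f f') ≤ C' * d / B := by
  refine ⟨1, 100, le_refl 1, by norm_num, ?_⟩
  intro a c n B hna hBc hB2 hBn F hF2 hFeven hF4B G hG d hd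
  haveI : NeZero n := ⟨by rw [hna]; positivity⟩
  obtain ⟨hGsym, hGbound, hGpass, hGdecay⟩ := hG
  have hn0 : 0 < n := Nat.pos_of_ne_zero (NeZero.ne n)
  have ha2 : 2 ≤ a := by
    by_contra h
    push_neg at h
    interval_cases a <;> rw [hna] at hBn <;> norm_num at hBn <;> omega
  have hn4 : 4 ≤ n := by
    rw [hna]
    calc 4 = 2^2 := rfl
      _ ≤ 2^a := Nat.pow_le_pow_right (by norm_num) ha2
  have hn2 : 2 ∣ n := by rw [hna]; exact dvd_pow_self 2 (by omega)
  have hBdvd : B ∣ n := by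
    rw [hna, hBc]
    refine pow_dvd_pow 2 ?_
    have : (2:ℕ)^c < 2^a := by rw [← hna, ← hBc]; exact hBn
    exact le_of_lt ((Nat.pow_lt_pow_iff_right (by norm_num)).mp this)
  have hB0R : (0:ℝ) < B := by positivity
  have hn0R : (0:ℝ) < n := by exact_mod_cast hn0
  have hB2R : (2:ℝ) ≤ B := by exact_mod_cast hB2
  -- get the family
  have hd' : (B:ℝ) * Real.log n ≤ d := by
    rw [show (1:ℝ) * B * Real.log n = B * Real.log n by ring] at hd
    exact hd
  obtain ⟨σ, hσodd, hσgood⟩ := exists_family hna hBc hB2 hBn d hd'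
  refine ⟨σ, fun _ => 0, hσodd, ?_⟩
  intro f f' hne
  set Δ : ZMod n := f' - f with hΔdef
  have hΔ : Δ ≠ 0 := sub_ne_zero_of_ne (Ne.symm hne)
  -- bounds per r
  have hdiagG : ∀ r : Fin d, 1/2 ≤ G (offset n B (σ r) 0 f f) ∧ G (offset n B (σ r) 0 f f) ≤ 1 := by
    intro r
    have h1 := rep_offset_diag (n := n) (B := B) hBdvd hB2 hn2 (σ r) 0 f
    have h2 : (|rep n (offset n B (σ r) 0 f f)| : ℝ) ≤ (n:ℝ) / (2 * B) := by
      rw [le_div_iff₀ (by positivity)]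
      have : ((2 * (B:ℤ) * |rep n (offset n B (σ r) 0 f f)| : ℤ) : ℝ) ≤ ((n:ℤ) : ℝ) := by
        exact_mod_cast h1
      push_cast at this
      linarith
    have h3 := hGpass _ h2
    have h4 : ((1:ℝ)/4)^(F-1) ≤ 1/2 := by
      calc ((1:ℝ)/4)^(F-1) ≤ 1/B := hF4B
        _ ≤ 1/2 := by
          apply div_le_div_of_nonneg_left (by norm_num) (by norm_num) hB2R
    exact ⟨by linarith, (hGbound _).2⟩
  have hinv : ∀ r : Fin d, (G (offset n B (σ r) 0 f f))⁻¹ ≤ 2 ∧ 0 ≤ (G (offset n B (σ r) 0 f f))⁻¹ := by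
    intro r
    have h1 := (hdiagG r).1
    constructor
    · rw [inv_le_comm₀ (by linarith) (by norm_num)]
      linarith
    · apply inv_nonneg.mpr
      linarith
  have hterm : ∀ r : Fin d,
      (G (offset n B (σ r) 0 f f))⁻¹ * G (offset n B (σ r) 0 f f')
        ≤ (if (B:ℤ) * |rep n ((σ r) * Δ)| < 2*(n:ℤ) then (2:ℝ) else 2/B) := by
    intro r
    have hGq0 : 0 ≤ G (offset n B (σ r) 0 f f') := (hGbound _).1
    have hmul : (G (offset n B (σ r) 0 f f))⁻¹ * G (offset n B (σ r) 0 f f')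
        ≤ 2 * G (offset n B (σ r) 0 f f') :=
      mul_le_mul_of_nonneg_right (hinv r).1 hGq0
    by_cases hbad : (B:ℤ) * |rep n ((σ r) * Δ)| < 2*(n:ℤ)
    · rw [if_pos hbad]
      calc _ ≤ 2 * G (offset n B (σ r) 0 f f') := hmul
        _ ≤ 2 * 1 := by linarith [(hGbound (offset n B (σ r) 0 f f')).2]
        _ = 2 := by norm_num
    · rw [if_neg hbad]
      push_neg at hbad
      have hrep := rep_offset_nondiag hBdvd hB2 hn2 (σ := σ r) (b := 0) (f := f) (f' := f') (by
        rw [← hΔdef]; exact hbad)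
      have hrepR : (n:ℝ) ≤ (B:ℝ) * (|rep n (offset n B (σ r) 0 f f')| : ℝ) := by
        exact_mod_cast hrep
      have hrep0 : (0:ℝ) < (|rep n (offset n B (σ r) 0 f f')| : ℝ) := by
        by_contra hc
        push_neg at hc
        nlinarith
      have h5 : (n:ℝ)/B ≤ (|rep n (offset n B (σ r) 0 f f')| : ℝ) := by
        rw [div_le_iff₀ hB0R]
        linarith [hrepR]
      have h6 := hGdecay _ h5
      have h7 : ((n:ℝ) / (B * (|rep n (offset n B (σ r) 0 f f')| : ℝ))) ^ (F-1) ≤ 1 := by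
        apply pow_le_one₀
        · positivity
        · rw [div_le_one (by positivity)]
          linarith
      have h8 : G (offset n B (σ r) 0 f f') ≤ 1/B := by
        calc G (offset n B (σ r) 0 f f')
            ≤ (1/4:ℝ)^(F-1) * ((n:ℝ) / (B * (|rep n (offset n B (σ r) 0 f f')| : ℝ))) ^ (F-1) := h6
          _ ≤ (1/4:ℝ)^(F-1) * 1 := by
              apply mul_le_mul_of_nonneg_left h7 (by positivity)
          _ = (1/4:ℝ)^(F-1) := by ring
          _ ≤ 1/B := hF4B
      calc _ ≤ 2 * G (offset n B (σ r) 0 f f') := hmul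
        _ ≤ 2 * (1/B) := by linarith
        _ = 2/B := by ring
  -- sum up
  have hsum : ∑ r : Fin d, (G (offset n B (σ r) 0 f f))⁻¹ * G (offset n B (σ r) 0 f f')
      ≤ ∑ r : Fin d, (if (B:ℤ) * |rep n ((σ r) * Δ)| < 2*(n:ℤ) then (2:ℝ) else 2/B) :=
    Finset.sum_le_sum (fun r _ => hterm r)
  have hX := hσgood Δ hΔ
  have hsum2 : ∑ r : Fin d, (if (B:ℤ) * |rep n ((σ r) * Δ)| < 2*(n:ℤ) then (2:ℝ) else 2/B)
      ≤ 2 * (17 * d / B) + (2/B) * d := by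
    rw [Finset.sum_ite, Finset.sum_const, Finset.sum_const]
    simp only [nsmul_eq_mul]
    have hc1 : ((univ.filter fun r : Fin d => (B:ℤ) * |rep n ((σ r) * Δ)| < 2*(n:ℤ)).card : ℝ)
        ≤ 17 * d / B := hX
    have hc2 : ((univ.filter fun r : Fin d => ¬((B:ℤ) * |rep n ((σ r) * Δ)| < 2*(n:ℤ))).card : ℝ)
        ≤ d := by
      have := Finset.card_filter_le (univ : Finset (Fin d))
        (fun r => ¬((B:ℤ) * |rep n ((σ r) * Δ)| < 2*(n:ℤ)))
      have hcu : (univ : Finset (Fin d)).card = d := by rw [Finset.card_univ, Fintype.card_fin]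
      exact_mod_cast hcu ▸ this
    have h2B : (0:ℝ) ≤ 2/B := by positivity
    nlinarith
  have hfinal : 2 * (17 * (d:ℝ) / B) + (2/B) * d ≤ 100 * d / B := by
    have h1 : 2 * (17 * (d:ℝ) / B) + (2/B) * d = 36 * ((d:ℝ)/B) := by ring
    have h2 : (100:ℝ) * d / B = 100 * ((d:ℝ)/B) := by ring
    have h3 : (0:ℝ) ≤ (d:ℝ)/B := by positivity
    rw [h1, h2]
    linarith
  calc ∑ r : Fin d, (G (offset n B (σ r) 0 f f))⁻¹ * G (offset n B (σ r) 0 f f')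
      ≤ 2 * (17 * d / B) + (2/B) * d := le_trans hsum hsum2
    _ ≤ 100 * d / B := hfinal
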